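/- Let n = 2M, let A be an invertible real n×n matrix, λ ∈ ℝᴹ, and L = A⁻¹(⊕ᵢ λᵢ J)A. Let Ψ : ℝⁿ → ℝᵐ satisfy Ψ(exp(tL)·x) = Ψ(x) for all t ∈ ℝ and all x ∈ ℝⁿ. Then there exists φ : ℝⁿ → ℝᵐ such that for every x ∈ ℝⁿ with (Ax)₁ ≠ 0 and every t₀ ∈ ℝ satisfying R(t₀λ₁)e₁ = (Ax)₁/‖(Ax)₁‖₂, Ψ(x) = φ(invRep_e(x; t₀)). -/

import Mathlib

/-!
The flow `exp(tL)` is conjugate by `A` to the block rotation `⊕ᵢ R(tλᵢ)`, because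
`s • J` is the image of `s·i` under `ℂ → M₂(ℝ)` and hence exponentiates to `R(s)`.
A valid `t₀` is exactly one for which `R(−t₀λ₁)` turns `v₁` onto `‖v₁‖₂ e₁`, so
`invRep_e(x; t₀) = A · exp(−t₀L) x`. Taking `φ(y) = Ψ(A⁻¹y)` therefore works by invariance.
-/

open Matrix NormedSpace

noncomputable section

/-- `R(t)`: the 2×2 rotation matrix. -/
def R2 (t : ℝ) : Matrix (Fin 2) (Fin 2) ℝ :=
  !![Real.cos t, -Real.sin t; Real.sin t, Real.cos t]

/-- `H(t)`: the 2×2 hyperbolic rotation with rows (cosh t, sinh t), (sinh t, cosh t). -/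
def Hyp (t : ℝ) : Matrix (Fin 2) (Fin 2) ℝ :=
  !![Real.cosh t, Real.sinh t; Real.sinh t, Real.cosh t]

/-- `G(t)`: the 2×2 shear with rows (1, t), (0, 1). -/
def Gm (t : ℝ) : Matrix (Fin 2) (Fin 2) ℝ := !![1, t; 0, 1]

/-- `J`: rows (0, -1), (1, 0). -/
def Jmat : Matrix (Fin 2) (Fin 2) ℝ := !![0, -1; 1, 0]

/-- `K`: rows (0, 1), (1, 0). -/
def Kmat : Matrix (Fin 2) (Fin 2) ℝ := !![0, 1; 1, 0]

/-- `N`: rows (0, 1), (0, 0). -/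
def Nmat : Matrix (Fin 2) (Fin 2) ℝ := !![0, 1; 0, 0]

/-- Index type for `ℝⁿ` with `n = 2M`: component `2(i-1)+p` of block `i` is indexed `(p, i)`. -/
abbrev Idx (M : ℕ) := Fin 2 × Fin M

/-- The block-diagonal matrix `⊕ᵢ Cᵢ`. -/
def bdiag {M : ℕ} (C : Fin M → Matrix (Fin 2) (Fin 2) ℝ) : Matrix (Idx M) (Idx M) ℝ :=
  Matrix.blockDiagonal C

/-- The `i`-th 2-dimensional block `vᵢ` of a vector `v ∈ ℝⁿ`. -/
def blk {M : ℕ} (v : Idx M → ℝ) (i : Fin M) : Fin 2 → ℝ := fun p => v (p, i)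

/-- Concatenation `u₁ ⊕ ⋯ ⊕ u_M` of 2-dimensional blocks. -/
def cat {M : ℕ} (u : Fin M → (Fin 2 → ℝ)) : Idx M → ℝ := fun pi => u pi.2 pi.1

/-- `e₁ = (1, 0) ∈ ℝ²`. -/
def e1 : Fin 2 → ℝ := ![1, 0]

/-- `e₂ = (0, 1) ∈ ℝ²`. -/
def e2 : Fin 2 → ℝ := ![0, 1]

/-- The Euclidean norm `‖u‖₂` of `u ∈ ℝ²`. -/
def norm2 (u : Fin 2 → ℝ) : ℝ := Real.sqrt (u 0 ^ 2 + u 1 ^ 2)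

/-- The inverse hyperbolic tangent. -/
def artanh (x : ℝ) : ℝ := Real.log ((1 + x) / (1 - x)) / 2

/-- `t₀` is valid for `x` (elliptic case): `R(t₀λ₁)e₁ = v₁/‖v₁‖₂` where `v = Ax`. -/
def validE {M : ℕ} [NeZero M] (A : Matrix (Idx M) (Idx M) ℝ) (lam : Fin M → ℝ)
    (x : Idx M → ℝ) (t₀ : ℝ) : Prop :=
  (R2 (t₀ * lam 0)).mulVec e1 = (norm2 (blk (A.mulVec x) 0))⁻¹ • blk (A.mulVec x) 0

/-- `invRep_e(x; t₀) = ‖v₁‖₂ e₁ ⊕ R(−t₀λ₂)v₂ ⊕ ⋯ ⊕ R(−t₀λ_M)v_M`, where `v = Ax`. -/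
def invRepE {M : ℕ} [NeZero M] (A : Matrix (Idx M) (Idx M) ℝ) (lam : Fin M → ℝ)
    (x : Idx M → ℝ) (t₀ : ℝ) : Idx M → ℝ :=
  cat (fun i =>
    if i = 0 then norm2 (blk (A.mulVec x) 0) • e1
    else (R2 (-(t₀ * lam i))).mulVec (blk (A.mulVec x) i))

/-- The hyperbolic parameter `t₀ = artanh(v_{1,2}/v_{1,1})/λ₁`, where `v = Ax`. -/
def t0H {M : ℕ} [NeZero M] (A : Matrix (Idx M) (Idx M) ℝ) (lam : Fin M → ℝ)
    (x : Idx M → ℝ) : ℝ :=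
  artanh (blk (A.mulVec x) 0 1 / blk (A.mulVec x) 0 0) / lam 0

/-- `invRep_h(x) = sgn(v_{1,1})√(v_{1,1}² − v_{1,2}²) e₁ ⊕ H(−t₀λ₂)v₂ ⊕ ⋯`, `v = Ax`. -/
def invRepH {M : ℕ} [NeZero M] (A : Matrix (Idx M) (Idx M) ℝ) (lam : Fin M → ℝ)
    (x : Idx M → ℝ) : Idx M → ℝ :=
  cat (fun i =>
    if i = 0 then
      (Real.sign (blk (A.mulVec x) 0 0) *
        Real.sqrt (blk (A.mulVec x) 0 0 ^ 2 - blk (A.mulVec x) 0 1 ^ 2)) • e1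
    else (Hyp (-(t0H A lam x * lam i))).mulVec (blk (A.mulVec x) i))

/-- The parabolic parameter `t₀ = v_{1,1}/(λ₁ v_{1,2})`, where `v = Ax`. -/
def t0P {M : ℕ} [NeZero M] (A : Matrix (Idx M) (Idx M) ℝ) (lam : Fin M → ℝ)
    (x : Idx M → ℝ) : ℝ :=
  blk (A.mulVec x) 0 0 / (lam 0 * blk (A.mulVec x) 0 1)

/-- `invRep_p(x) = v_{1,2} e₂ ⊕ G(−t₀λ₂)v₂ ⊕ ⋯ ⊕ G(−t₀λ_M)v_M`, where `v = Ax`. -/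
def invRepP {M : ℕ} [NeZero M] (A : Matrix (Idx M) (Idx M) ℝ) (lam : Fin M → ℝ)
    (x : Idx M → ℝ) : Idx M → ℝ :=
  cat (fun i =>
    if i = 0 then blk (A.mulVec x) 0 1 • e2
    else (Gm (-(t0P A lam x * lam i))).mulVec (blk (A.mulVec x) i))

open scoped Norms.Operator in
theorem exp_smul_Jmat (s : ℝ) : exp (s • Jmat) = R2 s := by
  have hJ : s • Jmat = Algebra.leftMulMatrix Complex.basisOneI (s * Complex.I) := by
    rw [Algebra.leftMulMatrix_complex]
    ext i j; fin_cases i <;> fin_cases j <;> simp [Jmat]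
  have hcont : Continuous (Algebra.leftMulMatrix Complex.basisOneI) :=
    (Algebra.leftMulMatrix Complex.basisOneI).toLinearMap.continuous_of_finiteDimensional
  rw [hJ]
  -- `erw`: the operator-norm instances on matrices match the default ones only up to defeq
  erw [← map_exp _ hcont]
  rw [← Complex.exp_eq_exp_ℂ, Complex.exp_mul_I, Algebra.leftMulMatrix_complex]
  ext i j; fin_cases i <;> fin_cases j <;>
    simp [R2, Complex.cos_ofReal_re, Complex.sin_ofReal_re]

theorem R2_neg_mul_self (s : ℝ) : R2 (-s) * R2 s = 1 := by
  ext i j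
  fin_cases i <;> fin_cases j <;>
    simp [R2, Matrix.mul_apply, Fin.sum_univ_two] <;>
    nlinarith [Real.sin_sq_add_cos_sq s]

theorem norm2_ne_zero {u : Fin 2 → ℝ} (hu : u ≠ 0) : norm2 u ≠ 0 := by
  have : u 0 ≠ 0 ∨ u 1 ≠ 0 := by
    contrapose! hu
    ext i; fin_cases i <;> simp [hu.1, hu.2]
  unfold norm2
  rcases this with h | h <;> positivity

theorem R2_neg_mulVec_eq_norm2_smul_e1 {s : ℝ} {u : Fin 2 → ℝ} (hu : u ≠ 0)
    (hs : R2 s *ᵥ e1 = (norm2 u)⁻¹ • u) : R2 (-s) *ᵥ u = norm2 u • e1 := by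
  have hu' : u = norm2 u • R2 s *ᵥ e1 := by rw [hs, smul_inv_smul₀ (norm2_ne_zero hu)]
  conv_lhs => rw [hu']
  rw [mulVec_smul, mulVec_mulVec, R2_neg_mul_self, one_mulVec]

theorem Matrix.exp_nonsing_inv_mul_mul {m 𝔸 : Type*} [Fintype m] [DecidableEq m]
    [NormedCommRing 𝔸] [NormedAlgebra ℚ 𝔸] [CompleteSpace 𝔸]
    {A : Matrix m m 𝔸} (hA : IsUnit A) (B : Matrix m m 𝔸) :
    exp (A⁻¹ * B * A) = A⁻¹ * exp B * A := by
  obtain ⟨U, rfl⟩ := hA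
  rw [← coe_units_inv]
  exact exp_units_conj' U B

theorem bdiag_mulVec {M : ℕ} (C : Fin M → Matrix (Fin 2) (Fin 2) ℝ) (v : Idx M → ℝ) :
    bdiag C *ᵥ v = cat fun i => C i *ᵥ blk v i := by
  ext ⟨p, i⟩
  simp [bdiag, cat, blk, mulVec, dotProduct, Fintype.sum_prod_type, blockDiagonal_apply,
    ite_mul]

open scoped Norms.Operator in
theorem exp_smul_bdiag_smul_Jmat {M : ℕ} (lam : Fin M → ℝ) (t : ℝ) :
    exp (t • bdiag fun i => lam i • Jmat) = bdiag fun i => R2 (t * lam i) := by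
  rw [bdiag, ← blockDiagonal_smul, exp_blockDiagonal, bdiag]
  congr 1
  ext1 i
  erw [Pi.coe_exp]
  rw [Pi.smul_apply, smul_smul]
  exact exp_smul_Jmat _

theorem invRepE_eq_bdiag_mulVec {M : ℕ} [NeZero M] (A : Matrix (Idx M) (Idx M) ℝ)
    (lam : Fin M → ℝ) {x : Idx M → ℝ} (hx : blk (A *ᵥ x) 0 ≠ 0) {t₀ : ℝ}
    (ht₀ : validE A lam x t₀) :
    invRepE A lam x t₀ = (bdiag fun i => R2 (-t₀ * lam i)) *ᵥ (A *ᵥ x) := by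
  rw [bdiag_mulVec, invRepE]
  congr 1
  ext1 i
  split_ifs with hi
  · subst hi
    rw [neg_mul, R2_neg_mulVec_eq_norm2_smul_e1 hx ht₀]
  · rw [neg_mul]

/-- **Elliptic invariant functions, invertible `A`.** If `Ψ(exp(tL)x) = Ψ(x)`
for all `t, x`, with `L = A⁻¹(⊕ᵢ λᵢJ)A`, then there is `φ` with `Ψ(x) = φ(invRep_e(x; t₀))`
for every `x` with `(Ax)₁ ≠ 0` and every `t₀` with `R(t₀λ₁)e₁ = (Ax)₁/‖(Ax)₁‖₂`. -/
theorem stmt17 (M : ℕ) [NeZero M] (m : ℕ)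
    (A : Matrix (Idx M) (Idx M) ℝ) (hA : IsUnit A)
    (lam : Fin M → ℝ) (L : Matrix (Idx M) (Idx M) ℝ)
    (hL : L = A⁻¹ * bdiag (fun i => lam i • Jmat) * A)
    (Ψ : (Idx M → ℝ) → (Fin m → ℝ))
    (hΨ : ∀ (t : ℝ) (x : Idx M → ℝ), Ψ ((exp (t • L)).mulVec x) = Ψ x) :
    ∃ φ : (Idx M → ℝ) → (Fin m → ℝ),
      ∀ x : Idx M → ℝ, blk (A.mulVec x) 0 ≠ 0 →
        ∀ t₀ : ℝ, validE A lam x t₀ → Ψ x = φ (invRepE A lam x t₀) := by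
  have hflow (t : ℝ) : exp (t • L) = A⁻¹ * bdiag (fun i => R2 (t * lam i)) * A := by
    rw [hL, ← smul_mul_assoc, ← mul_smul_comm, Matrix.exp_nonsing_inv_mul_mul hA,
      exp_smul_bdiag_smul_Jmat]
  refine ⟨fun y => Ψ (A⁻¹ *ᵥ y), fun x hx t₀ ht₀ => ?_⟩
  dsimp only
  rw [invRepE_eq_bdiag_mulVec A lam hx ht₀, mulVec_mulVec, mulVec_mulVec,
    ← hflow, hΨ]
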